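/- arXiv:2102.03960 — 2 statements merged into one kernel-verified Lean document; each statement's English description precedes it below -/
import Mathlib

section
/- Let G be a simple graph on n vertices whose Sombor eigenvalues all have equal absolute value, i.e., |ρ_1| = |ρ_2| = ... = |ρ_n|. Then G is either the empty graph on n vertices or a disjoint union of n/2 edges (a perfect matching); and conversely both of these graphs have all Sombor eigenvalues of equal absolute value. -/
open scoped Classical

noncomputable def somborMatrix {V : Type*} [Fintype V] (G : SimpleGraph V) :
    Matrix V V ℝ := fun i j =>
  if G.Adj i j then Real.sqrt ((G.degree i : ℝ) ^ 2 + (G.degree j : ℝ) ^ 2) else 0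

lemma somborMatrix_isHermitian {V : Type*} [Fintype V] (G : SimpleGraph V) :
    (somborMatrix G).IsHermitian := by
  apply Matrix.ext
  intro i j
  simp only [Matrix.conjTranspose_apply, star_trivial, somborMatrix]
  rw [G.adj_comm, add_comm]

/-- The Sombor eigenvalues of `G`. -/
noncomputable def somborEigs {V : Type*} [Fintype V] (G : SimpleGraph V) : V → ℝ :=
  (somborMatrix_isHermitian G).eigenvalues

/-- The Sombor spectral radius (largest Sombor eigenvalue). -/
noncomputable def somborSpecRad {V : Type*} [Fintype V] (G : SimpleGraph V) : ℝ :=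
  ⨆ i, somborEigs G i

/-- The Sombor energy. -/
noncomputable def somborEnergy {V : Type*} [Fintype V] (G : SimpleGraph V) : ℝ :=
  ∑ i, |somborEigs G i|

/-- The Sombor Estrada index. -/
noncomputable def somborEstrada {V : Type*} [Fintype V] (G : SimpleGraph V) : ℝ :=
  ∑ i, Real.exp (somborEigs G i)

/-- The forgotten topological index `F = ∑ d_i ^ 3`. -/
noncomputable def forgottenIndex {V : Type*} [Fintype V] (G : SimpleGraph V) : ℝ :=
  ∑ i, (G.degree i : ℝ) ^ 3

/-!
A real symmetric matrix has all eigenvalues of absolute value `c` iff its square is `c² • 1`.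
The Sombor matrix `S` is entrywise nonnegative with support exactly the edge set, so
`(S * S) i j > 0` iff `i` and `j` have a common neighbour. Hence `S * S` is scalar iff either no
vertex has a neighbour (`G = ⊥`), or every vertex has one and distinct vertices never share one,
which is 1-regularity. Conversely, for a 1-regular graph `S = √2 • A` with `A * A = 1`.
-/

namespace Matrix

theorem mul_apply_pos_iff_of_nonneg {l m n R : Type*} [Fintype m] [Semiring R] [LinearOrder R]
    [IsStrictOrderedRing R] {A : Matrix l m R} {B : Matrix m n R} (hA : ∀ i j, 0 ≤ A i j)
    (hB : ∀ i j, 0 ≤ B i j) (i : l) (k : n) :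
    0 < (A * B) i k ↔ ∃ j, 0 < A i j ∧ 0 < B j k := by
  rw [mul_apply, Finset.sum_pos_iff_of_nonneg fun j _ => mul_nonneg (hA i j) (hB j k)]
  simp only [Finset.mem_univ, true_and]
  exact exists_congr fun j =>
    ⟨fun h => ⟨pos_of_mul_pos_left h (hB j k), pos_of_mul_pos_right h (hA i j)⟩,
      fun h => mul_pos h.1 h.2⟩

namespace IsHermitian

variable {𝕜 n : Type*} [RCLike 𝕜] [Fintype n] [DecidableEq n] {A : Matrix n n 𝕜}

theorem mul_self_eq_smul_one_iff (hA : A.IsHermitian) (d : ℝ) :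
    A * A = d • (1 : Matrix n n 𝕜) ↔ ∀ i, hA.eigenvalues i ^ 2 = d := by
  have hd : d • (1 : Matrix n n 𝕜) =
      Unitary.conjStarAlgAut 𝕜 _ hA.eigenvectorUnitary ((d : 𝕜) • 1) := by
    rw [map_smul, map_one, RCLike.real_smul_eq_coe_smul (K := 𝕜)]
  conv_lhs => rw [hA.spectral_theorem, ← map_mul, hd, EmbeddingLike.apply_eq_iff_eq,
    diagonal_mul_diagonal, smul_one_eq_diagonal, diagonal_eq_diagonal_iff]
  simp only [Function.comp_apply, ← pow_two]
  norm_cast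

theorem exists_abs_eigenvalues_eq_iff (hA : A.IsHermitian) :
    (∃ c, ∀ i, |hA.eigenvalues i| = c) ↔ ∃ c : ℝ, A * A = c ^ 2 • (1 : Matrix n n 𝕜) := by
  simp only [hA.mul_self_eq_smul_one_iff, sq_eq_sq_iff_abs_eq_abs]
  refine ⟨fun ⟨c, hc⟩ => ⟨c, fun i => ?_⟩, fun ⟨c, hc⟩ => ⟨|c|, hc⟩⟩
  rw [hc i, abs_of_nonneg (hc i ▸ abs_nonneg _)]

end IsHermitian

end Matrix

namespace SimpleGraph

variable {V : Type*} (G : SimpleGraph V)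

theorem isRegularOfDegree_one_iff [Fintype V] :
    G.IsRegularOfDegree 1 ↔ ∀ i j, (∃ k, G.Adj i k ∧ G.Adj k j) ↔ i = j := by
  constructor
  · refine fun h i j => ⟨fun ⟨k, hik, hkj⟩ => ?_, ?_⟩
    · exact Finset.card_le_one.mp (h k).le i ((G.mem_neighborFinset k i).mpr hik.symm) j
        ((G.mem_neighborFinset k j).mpr hkj)
    · rintro rfl
      obtain ⟨k, hk⟩ := G.degree_pos_iff_exists_adj i |>.mp (by rw [h i]; exact one_pos)
      exact ⟨k, hk, hk.symm⟩
  · intro h v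
    obtain ⟨k, hk, -⟩ := (h v v).mpr rfl
    rw [degree, Finset.card_eq_one]
    refine ⟨k, Finset.eq_singleton_iff_unique_mem.mpr ⟨(G.mem_neighborFinset v k).mpr hk, ?_⟩⟩
    intro a ha
    exact (h a k).mp ⟨v, ((G.mem_neighborFinset v a).mp ha).symm, hk⟩

theorem adjMatrix_mul_self_of_isRegularOfDegree_one [Fintype V] [DecidableEq V]
    {R : Type*} [NonAssocSemiring R] (h : G.IsRegularOfDegree 1) :
    G.adjMatrix R * G.adjMatrix R = 1 := by
  ext v w
  obtain ⟨u, hu⟩ := Finset.card_eq_one.mp (h v)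
  have hvu : G.Adj v u := (G.mem_neighborFinset v u).mp (hu ▸ Finset.mem_singleton_self u)
  have hadj : G.Adj u w ↔ v = w :=
    ⟨fun huw => ((G.isRegularOfDegree_one_iff.mp h) v w).mp ⟨u, hvu, huw⟩,
      fun hvw => hvw ▸ hvu.symm⟩
  rw [adjMatrix_mul_apply, hu, Finset.sum_singleton, adjMatrix_apply, Matrix.one_apply]
  simp only [hadj]

end SimpleGraph

section Sombor

variable {V : Type*} [Fintype V] (G : SimpleGraph V)

theorem somborMatrix_nonneg (i j : V) : 0 ≤ somborMatrix G i j := by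
  unfold somborMatrix
  split_ifs
  exacts [Real.sqrt_nonneg _, le_rfl]

theorem somborMatrix_pos_iff (i j : V) : 0 < somborMatrix G i j ↔ G.Adj i j := by
  unfold somborMatrix
  split_ifs with h
  · have hdeg : 0 < G.degree i := G.degree_pos_iff_exists_adj i |>.mpr ⟨j, h⟩
    simp only [h, iff_true]
    positivity
  · simp [h]

theorem mul_self_somborMatrix_pos_iff (i j : V) :
    0 < (somborMatrix G * somborMatrix G) i j ↔ ∃ k, G.Adj i k ∧ G.Adj k j := by
  simp only [Matrix.mul_apply_pos_iff_of_nonneg (somborMatrix_nonneg G) (somborMatrix_nonneg G),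
    somborMatrix_pos_iff]

theorem somborMatrix_bot : somborMatrix (⊥ : SimpleGraph V) = 0 := by
  ext i j
  simp [somborMatrix]

theorem somborMatrix_of_isRegularOfDegree {r : ℕ} (h : G.IsRegularOfDegree r) :
    somborMatrix G = (√2 * r) • G.adjMatrix ℝ := by
  ext i j
  simp only [somborMatrix, h i, h j, Matrix.smul_apply, SimpleGraph.adjMatrix_apply]
  split_ifs
  · rw [← two_mul, Real.sqrt_mul zero_le_two, Real.sqrt_sq (Nat.cast_nonneg r), smul_eq_mul,
      mul_one]
  · rw [smul_zero]

theorem exists_somborMatrix_mul_self_eq_iff [DecidableEq V] :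
    (∃ c : ℝ, somborMatrix G * somborMatrix G = c ^ 2 • (1 : Matrix V V ℝ)) ↔
      G = ⊥ ∨ G.IsRegularOfDegree 1 := by
  constructor
  · rintro ⟨c, hc⟩
    have hwalk : ∀ i j, (∃ k, G.Adj i k ∧ G.Adj k j) ↔ i = j ∧ c ≠ 0 := fun i j => by
      rw [← mul_self_somborMatrix_pos_iff, hc, Matrix.smul_apply, Matrix.one_apply]
      split_ifs <;> simp [*, sq_pos_iff]
    by_cases hc0 : c = 0
    · left
      ext i j
      simpa [hc0] using fun hij => hwalk i i |>.mp ⟨j, hij, hij.symm⟩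
    · exact Or.inr <| G.isRegularOfDegree_one_iff.mpr fun i j => by simpa [hc0] using hwalk i j
  · rintro (rfl | h)
    · exact ⟨0, by simp [somborMatrix_bot]⟩
    · refine ⟨√2, ?_⟩
      rw [somborMatrix_of_isRegularOfDegree G h, smul_mul_smul_comm,
        G.adjMatrix_mul_self_of_isRegularOfDegree_one h]
      norm_num

end Sombor

theorem stmt7 {n : ℕ} (G : SimpleGraph (Fin n)) :
    (∃ c : ℝ, ∀ i, |somborEigs G i| = c) ↔ (G = ⊥ ∨ ∀ v, G.degree v = 1) :=
  (somborMatrix_isHermitian G).exists_abs_eigenvalues_eq_iff.trans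
    (exists_somborMatrix_mul_self_eq_iff G)
end

section
/- Let G be a simple graph on n vertices with Sombor spectral radius ρ_1, Sombor energy E(G), and forgotten index F. Then 2ρ_1 ≤ E(G) ≤ ρ_1 + √((n−1)(2F − ρ_1²)). -/
open scoped Classical

/-!
The Sombor eigenvalues `λ_i` satisfy `∑ λ_i = tr S = 0` and `∑ λ_i² = tr S² = 2F`.
Since `λ_1 = ρ_1` equals `-∑_{i ≥ 2} λ_i`, it is at most `∑_{i ≥ 2} |λ_i|`, which gives the lower
bound; the upper bound is Cauchy–Schwarz applied to the `n - 1` numbers `|λ_i|`, `i ≥ 2`, whose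
squares sum to `2F - ρ_1²`.
-/

section RealSums

variable {ι : Type*} [Fintype ι] (f : ι → ℝ)

lemma two_mul_le_sum_abs_of_sum_eq_zero (hf : ∑ i, f i = 0) (m : ι) :
    2 * f m ≤ ∑ i, |f i| := by
  rw [← Finset.add_sum_erase _ _ (Finset.mem_univ m)] at hf ⊢
  have : -∑ i ∈ Finset.univ.erase m, f i ≤ ∑ i ∈ Finset.univ.erase m, |f i| := by
    rw [← Finset.sum_neg_distrib]
    exact Finset.sum_le_sum fun i _ => neg_le_abs (f i)
  linarith [le_abs_self (f m)]

lemma sum_abs_le_abs_add_sqrt (m : ι) :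
    ∑ i, |f i| ≤ |f m| + √((Fintype.card ι - 1) * (∑ i, f i ^ 2 - f m ^ 2)) := by
  have : Nonempty ι := ⟨m⟩
  set s := Finset.univ.erase m
  have hcard : (s.card : ℝ) = Fintype.card ι - 1 := by
    rw [Finset.card_erase_of_mem (Finset.mem_univ m), Finset.card_univ,
      Nat.cast_sub Fintype.card_pos, Nat.cast_one]
  have hsq : ∑ i ∈ s, f i ^ 2 = ∑ i, f i ^ 2 - f m ^ 2 :=
    Finset.sum_erase_eq_sub (Finset.mem_univ m)
  have hCS : ∑ i ∈ s, |f i| ≤ √((Fintype.card ι - 1) * (∑ i, f i ^ 2 - f m ^ 2)) := by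
    refine Real.le_sqrt_of_sq_le ?_
    rw [← hcard, ← hsq]
    simpa only [sq_abs] using sq_sum_le_card_mul_sum_sq (s := s) (f := fun i => |f i|)
  rw [← Finset.add_sum_erase _ _ (Finset.mem_univ m)]
  linarith

lemma nonneg_of_sum_eq_zero_of_forall_le (hf : ∑ i, f i = 0) {m : ι} (hm : ∀ i, f i ≤ f m) :
    0 ≤ f m := by
  have := Finset.sum_le_card_nsmul Finset.univ f (f m) fun i _ => hm i
  rw [hf, nsmul_eq_mul] at this
  have hcard : (0 : ℝ) < (Finset.univ : Finset ι).card := by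
    exact_mod_cast Finset.card_pos.2 ⟨m, Finset.mem_univ m⟩
  exact nonneg_of_mul_nonneg_right this hcard

end RealSums

namespace Matrix.IsHermitian

variable {𝕜 n : Type*} [RCLike 𝕜] [Fintype n] [DecidableEq n] {A : Matrix n n 𝕜}

lemma trace_mul_self_eq_sum_sq_eigenvalues (hA : A.IsHermitian) :
    (A * A).trace = ∑ i, (hA.eigenvalues i : 𝕜) ^ 2 := by
  conv_lhs => rw [hA.spectral_theorem, ← map_mul, Unitary.conjStarAlgAut_apply, trace_mul_cycle,
    Unitary.coe_star_mul_self, one_mul, diagonal_mul_diagonal, trace_diagonal]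
  simp [sq]

end Matrix.IsHermitian

namespace SimpleGraph

variable {V : Type*} [Fintype V] (G : SimpleGraph V)

lemma sum_sum_ite_adj_add {M : Type*} [AddCommMonoid M] [DecidableRel G.Adj] (f : V → M) :
    ∑ i, ∑ j, (if G.Adj i j then f i + f j else 0) = 2 • ∑ i, G.degree i • f i := by
  have hdeg : ∀ i, ∑ j, (if G.Adj i j then f i else 0) = G.degree i • f i := by
    intro i
    rw [Finset.sum_ite, Finset.sum_const_zero, add_zero, Finset.sum_const,
      ← neighborFinset_eq_filter, card_neighborFinset_eq_degree]
  have hswap : ∑ i, ∑ j, (if G.Adj i j then f j else 0) =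
      ∑ i, ∑ j, (if G.Adj i j then f i else 0) := by
    rw [Finset.sum_comm]
    simp only [G.adj_comm]
  simp only [ite_add_zero, Finset.sum_add_distrib, hswap, hdeg, two_nsmul]

end SimpleGraph

section Sombor

variable {V : Type*} [Fintype V] (G : SimpleGraph V)

lemma somborMatrix_trace : (somborMatrix G).trace = 0 := by
  simp [Matrix.trace, somborMatrix]

lemma somborMatrix_mul_self_trace :
    (somborMatrix G * somborMatrix G).trace = 2 * forgottenIndex G := by
  have hentry : ∀ i j, somborMatrix G i j * somborMatrix G j i =
      if G.Adj i j then (G.degree i : ℝ) ^ 2 + (G.degree j : ℝ) ^ 2 else 0 := by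
    intro i j
    simp only [somborMatrix, G.adj_comm j i]
    split_ifs
    · rw [add_comm ((G.degree j : ℝ) ^ 2)]
      exact Real.mul_self_sqrt (by positivity)
    · simp
  simp only [Matrix.trace, Matrix.diag, Matrix.mul_apply, hentry, G.sum_sum_ite_adj_add,
    forgottenIndex, nsmul_eq_mul, Nat.cast_ofNat]
  simp only [← pow_succ']

lemma sum_somborEigs : ∑ i, somborEigs G i = 0 := by
  simpa [somborEigs, somborMatrix_trace, eq_comm] using
    (somborMatrix_isHermitian G).trace_eq_sum_eigenvalues

lemma sum_sq_somborEigs : ∑ i, somborEigs G i ^ 2 = 2 * forgottenIndex G := by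
  simpa [somborEigs, somborMatrix_mul_self_trace] using
    ((somborMatrix_isHermitian G).trace_mul_self_eq_sum_sq_eigenvalues).symm

theorem two_mul_somborSpecRad_le_somborEnergy : 2 * somborSpecRad G ≤ somborEnergy G := by
  cases isEmpty_or_nonempty V
  · simp [somborSpecRad, somborEnergy]
  · obtain ⟨m, hm⟩ := exists_eq_ciSup_of_finite (f := somborEigs G)
    rw [somborSpecRad, ← hm]
    exact two_mul_le_sum_abs_of_sum_eq_zero _ (sum_somborEigs G) m

theorem somborEnergy_le_somborSpecRad_add_sqrt :
    somborEnergy G ≤ somborSpecRad G +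
      √((Fintype.card V - 1) * (2 * forgottenIndex G - somborSpecRad G ^ 2)) := by
  cases isEmpty_or_nonempty V
  · simp only [somborEnergy, somborSpecRad, Finset.univ_eq_empty, Finset.sum_empty,
      Real.iSup_of_isEmpty, zero_add]
    positivity
  · obtain ⟨m, hm⟩ := exists_eq_ciSup_of_finite (f := somborEigs G)
    have hmax : ∀ i, somborEigs G i ≤ somborEigs G m :=
      fun i => hm ▸ le_ciSup (Set.finite_range _).bddAbove i
    have hnn := nonneg_of_sum_eq_zero_of_forall_le _ (sum_somborEigs G) hmax
    rw [somborEnergy, somborSpecRad, ← hm, ← sum_sq_somborEigs, ← abs_of_nonneg hnn]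
    simpa only [sq_abs] using sum_abs_le_abs_add_sqrt (somborEigs G) m

end Sombor

theorem stmt14 {n : ℕ} (G : SimpleGraph (Fin n)) :
    2 * somborSpecRad G ≤ somborEnergy G ∧
    somborEnergy G ≤ somborSpecRad G +
      Real.sqrt (((n : ℝ) - 1) * (2 * forgottenIndex G - (somborSpecRad G) ^ 2)) := by
  refine ⟨two_mul_somborSpecRad_le_somborEnergy G, ?_⟩
  simpa using somborEnergy_le_somborSpecRad_add_sqrt G
end
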